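/- Let X be a real Banach space, 1 ≤ p < ∞, and A : X ⇉ X* a monotone operator with nonempty graph. Suppose that for every z ∉ cl(dom A) and all sufficiently large λ > 0, the operator A + λ J_p(· − z) is maximally monotone. Then cl(dom A) = cl(conv(dom A)) = cl(P_X[dom F_A]), so dom A is nearly convex (its closure is convex). -/

import Mathlib

open Set

noncomputable section

variable {X : Type*}

/-- The domain of a set-valued operator `A : X ⇉ X*`, identified with its graph. -/
def opDom [NormedAddCommGroup X] [NormedSpace ℝ X]
    (A : Set (X × (X →L[ℝ] ℝ))) : Set X := Prod.fst '' A

/-- The range of a set-valued operator. -/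
def opRan [NormedAddCommGroup X] [NormedSpace ℝ X]
    (A : Set (X × (X →L[ℝ] ℝ))) : Set (X →L[ℝ] ℝ) := Prod.snd '' A

/-- `(x, x*)` is monotonically related to the set `S ⊆ X × X*`:
`⟨x − y, x* − y*⟩ ≥ 0` for all `(y, y*) ∈ S`. -/
def MonRel [NormedAddCommGroup X] [NormedSpace ℝ X]
    (p : X × (X →L[ℝ] ℝ)) (S : Set (X × (X →L[ℝ] ℝ))) : Prop :=
  ∀ q ∈ S, 0 ≤ (p.2 - q.2) (p.1 - q.1)

/-- `A` is a monotone operator (identified with its graph). -/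
def IsMonotoneOp [NormedAddCommGroup X] [NormedSpace ℝ X]
    (A : Set (X × (X →L[ℝ] ℝ))) : Prop :=
  ∀ p ∈ A, MonRel p A

/-- `A` is maximally monotone: it is monotone and every monotonically related
pair already belongs to the graph. -/
def IsMaxMonotoneOp [NormedAddCommGroup X] [NormedSpace ℝ X]
    (A : Set (X × (X →L[ℝ] ℝ))) : Prop :=
  IsMonotoneOp A ∧ ∀ p : X × (X →L[ℝ] ℝ), MonRel p A → p ∈ A

/-- The Fitzpatrick function of `A`, with values in `(-∞, +∞]` (modeled in `EReal`):
`F_A(x, x*) = sup_{(a,a*) ∈ A} (⟨a, x*⟩ + ⟨x, a*⟩ − ⟨a, a*⟩)`. -/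
def fitz [NormedAddCommGroup X] [NormedSpace ℝ X]
    (A : Set (X × (X →L[ℝ] ℝ))) (x : X) (x' : X →L[ℝ] ℝ) : EReal :=
  ⨆ a ∈ A, ((x' a.1 + a.2 x - a.2 a.1 : ℝ) : EReal)

/-- The domain of the Fitzpatrick function: the set of pairs where `F_A < +∞`. -/
def fitzDom [NormedAddCommGroup X] [NormedSpace ℝ X]
    (A : Set (X × (X →L[ℝ] ℝ))) : Set (X × (X →L[ℝ] ℝ)) :=
  {q | fitz A q.1 q.2 < ⊤}

/-- `J_p(x) = (1/p) ∂‖·‖^p (x)`, the subdifferential at `x` of `y ↦ ‖y‖^p / p`. -/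
def Jmap [NormedAddCommGroup X] [NormedSpace ℝ X]
    (p : ℝ) (x : X) : Set (X →L[ℝ] ℝ) :=
  {x' | ∀ y : X, x' (y - x) + ‖x‖ ^ p / p ≤ ‖y‖ ^ p / p}

/-- The graph of the operator `A + λ J_p(· − z)`. -/
def sumGraph [NormedAddCommGroup X] [NormedSpace ℝ X]
    (A : Set (X × (X →L[ℝ] ℝ))) (lam p : ℝ) (z : X) :
    Set (X × (X →L[ℝ] ℝ)) :=
  {q | ∃ a' b' : X →L[ℝ] ℝ, (q.1, a') ∈ A ∧ b' ∈ Jmap p (q.1 - z) ∧ q.2 = a' + lam • b'}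

/-!
Points of `P_X[dom F_A]` are squeezed between `dom A` and its closure: if `(x, x*) ∈ dom F_A`
but `x` has distance `d > 0` from `dom A`, then for `λ` large the coercive term
`λ J_p(· − x)`, which contributes at least `λ d^p / p` to the pairing, beats the finite
Fitzpatrick bound, so `(x, x*)` is monotonically related to `A + λ J_p(· − x)`; maximality puts
it into that graph and hence `x ∈ dom A`, a contradiction. Since `dom F_A` is convex, so is
its projection, and all three closures coincide.
-/

section Fitzpatrick

variable [NormedAddCommGroup X] [NormedSpace ℝ X] {A : Set (X × (X →L[ℝ] ℝ))}

lemma coe_le_fitz {a : X × (X →L[ℝ] ℝ)} (ha : a ∈ A) (x : X) (x' : X →L[ℝ] ℝ) :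
    ((x' a.1 + a.2 x - a.2 a.1 : ℝ) : EReal) ≤ fitz A x x' :=
  le_iSup₂ (f := fun a (_ : a ∈ A) => ((x' a.1 + a.2 x - a.2 a.1 : ℝ) : EReal)) a ha

lemma le_toReal_fitz {x : X} {x' : X →L[ℝ] ℝ} (hlt : fitz A x x' < ⊤)
    {a : X × (X →L[ℝ] ℝ)} (ha : a ∈ A) :
    x' a.1 + a.2 x - a.2 a.1 ≤ (fitz A x x').toReal := by
  have hle := coe_le_fitz ha x x'
  have hbot : fitz A x x' ≠ ⊥ := ((EReal.bot_lt_coe _).trans_le hle).ne'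
  rw [← EReal.coe_toReal hlt.ne hbot] at hle
  exact_mod_cast hle

lemma convex_fitzDom (A : Set (X × (X →L[ℝ] ℝ))) : Convex ℝ (fitzDom A) := by
  intro q hq r hr a b ha hb hab
  have hbound : fitz A (a • q + b • r).1 (a • q + b • r).2 ≤
      ((a * (fitz A q.1 q.2).toReal + b * (fitz A r.1 r.2).toReal : ℝ) : EReal) := by
    refine iSup₂_le fun w hw => EReal.coe_le_coe_iff.2 ?_
    have hq' := mul_le_mul_of_nonneg_left (le_toReal_fitz hq hw) ha
    have hr' := mul_le_mul_of_nonneg_left (le_toReal_fitz hr hw) hb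
    have hsplit : (a • q + b • r).2 w.1 + w.2 (a • q + b • r).1 - w.2 w.1
        = a * (q.2 w.1 + w.2 q.1 - w.2 w.1) + b * (r.2 w.1 + w.2 r.1 - w.2 w.1) := by
      simp only [Prod.fst_add, Prod.snd_add, Prod.smul_fst, Prod.smul_snd,
        add_apply, smul_apply, map_add, map_smul,
        smul_eq_mul]
      linear_combination w.2 w.1 * hab
    linarith
  exact hbound.trans_lt (EReal.coe_lt_top _)

lemma fitz_le_of_mem (hmono : IsMonotoneOp A) {a : X × (X →L[ℝ] ℝ)} (ha : a ∈ A) :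
    fitz A a.1 a.2 ≤ ((a.2 a.1 : ℝ) : EReal) := by
  refine iSup₂_le fun w hw => EReal.coe_le_coe_iff.2 ?_
  have hmw := hmono a ha w hw
  simp only [sub_apply, map_sub] at hmw
  linarith

lemma opDom_subset_fst_fitzDom (hmono : IsMonotoneOp A) :
    opDom A ⊆ Prod.fst '' fitzDom A := by
  rintro x ⟨a, ha, rfl⟩
  exact ⟨a, (fitz_le_of_mem hmono ha).trans_lt (EReal.coe_lt_top _), rfl⟩

end Fitzpatrick

lemma norm_rpow_div_le_of_mem_Jmap [NormedAddCommGroup X] [NormedSpace ℝ X] {p : ℝ}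
    (hp : 0 < p) {u : X} {b' : X →L[ℝ] ℝ} (hb : b' ∈ Jmap p u) : ‖u‖ ^ p / p ≤ b' u := by
  have h0 := hb 0
  rw [zero_sub, map_neg, norm_zero, Real.zero_rpow hp.ne', zero_div] at h0
  linarith

section SumGraph

variable [NormedAddCommGroup X] [NormedSpace ℝ X] {A : Set (X × (X →L[ℝ] ℝ))} {p lam d : ℝ}

lemma monRel_sumGraph_of_mem_fitzDom {q : X × (X →L[ℝ] ℝ)} (hq : q ∈ fitzDom A)
    (hp : 0 < p) (hd : 0 < d) (hdist : ∀ y ∈ opDom A, d ≤ ‖y - q.1‖) (hlam : 0 ≤ lam)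
    (hlarge : (fitz A q.1 q.2).toReal - q.2 q.1 ≤ lam * (d ^ p / p)) :
    MonRel q (sumGraph A lam p q.1) := by
  rintro w ⟨a', b', hA, hb, hw2⟩
  have hfitz := le_toReal_fitz hq hA
  have hJ := norm_rpow_div_le_of_mem_Jmap hp hb
  have hdp : d ^ p / p ≤ ‖w.1 - q.1‖ ^ p / p := by
    gcongr
    exact hdist w.1 ⟨_, hA, rfl⟩
  have hpair : (q.2 - w.2) (q.1 - w.1)
      = q.2 q.1 - (q.2 w.1 + a' q.1 - a' w.1) + lam * b' (w.1 - q.1) := by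
    simp only [hw2, sub_apply, add_apply,
      smul_apply, map_sub, smul_eq_mul]
    ring
  rw [hpair]
  nlinarith

lemma fst_fitzDom_subset_closure_opDom (hp : 0 < p)
    (h : ∀ z ∉ closure (opDom A), ∃ Λ : ℝ, 0 < Λ ∧ ∀ lam : ℝ, Λ ≤ lam →
      IsMaxMonotoneOp (sumGraph A lam p z)) :
    Prod.fst '' fitzDom A ⊆ closure (opDom A) := by
  rintro _ ⟨q, hq, rfl⟩
  by_contra hqD
  obtain ⟨Λ, hΛ, hmax⟩ := h q.1 hqD
  obtain ⟨d, hd, hdist⟩ : ∃ d > 0, ∀ y ∈ opDom A, d ≤ ‖y - q.1‖ := by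
    simpa [Metric.mem_closure_iff, dist_comm, dist_eq_norm] using hqD
  have hdp : 0 < d ^ p / p := div_pos (Real.rpow_pos_of_pos hd p) hp
  set lam := max Λ (((fitz A q.1 q.2).toReal - q.2 q.1) / (d ^ p / p))
  have hlarge : (fitz A q.1 q.2).toReal - q.2 q.1 ≤ lam * (d ^ p / p) :=
    (div_le_iff₀ hdp).1 (le_max_right _ _)
  have hmon := monRel_sumGraph_of_mem_fitzDom hq hp hd hdist
    (hΛ.le.trans (le_max_left _ _)) hlarge
  obtain ⟨a', -, hA, -⟩ := (hmax lam (le_max_left _ _)).2 q hmon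
  exact hqD (subset_closure ⟨_, hA, rfl⟩)

end SumGraph

theorem nearly_convex_of_maxMonotone_sum_general
    [NormedAddCommGroup X] [NormedSpace ℝ X]
    (p : ℝ) (hp : 1 ≤ p)
    (A : Set (X × (X →L[ℝ] ℝ))) (hmono : IsMonotoneOp A)
    (h : ∀ z ∉ closure (opDom A), ∃ Λ : ℝ, 0 < Λ ∧ ∀ lam : ℝ, Λ ≤ lam →
      IsMaxMonotoneOp (sumGraph A lam p z)) :
    closure (opDom A) = closure (convexHull ℝ (opDom A)) ∧
    closure (opDom A) = closure (Prod.fst '' fitzDom A) ∧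
    Convex ℝ (closure (opDom A)) := by
  have hDC := opDom_subset_fst_fitzDom hmono
  have hCD := fst_fitzDom_subset_closure_opDom (zero_lt_one.trans_le hp) h
  have hCconv : Convex ℝ (Prod.fst '' fitzDom A) :=
    (convex_fitzDom A).linear_image (LinearMap.fst ℝ X (X →L[ℝ] ℝ))
  have hclC : closure (opDom A) = closure (Prod.fst '' fitzDom A) :=
    (closure_mono hDC).antisymm (closure_minimal hCD isClosed_closure)
  have hclHull : closure (opDom A) = closure (convexHull ℝ (opDom A)) :=
    (closure_mono (subset_convexHull ℝ _)).antisymm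
      (hclC ▸ closure_mono (convexHull_min hDC hCconv))
  exact ⟨hclHull, hclC, hclHull ▸ (convex_convexHull ℝ _).closure⟩

/-- Theorem: if `A` is monotone with nonempty graph and for every `z ∉ cl(dom A)` and
all sufficiently large `λ > 0` the operator `A + λ J_p(· − z)` is maximally monotone,
then `cl(dom A) = cl(conv(dom A)) = cl(P_X[dom F_A])`, so `dom A` is nearly convex. -/
theorem nearly_convex_of_maxMonotone_sum
    [NormedAddCommGroup X] [NormedSpace ℝ X] [CompleteSpace X]
    (p : ℝ) (hp : 1 ≤ p)
    (A : Set (X × (X →L[ℝ] ℝ))) (hne : A.Nonempty) (hmono : IsMonotoneOp A)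
    (h : ∀ z ∉ closure (opDom A), ∃ Λ : ℝ, 0 < Λ ∧ ∀ lam : ℝ, Λ ≤ lam →
      IsMaxMonotoneOp (sumGraph A lam p z)) :
    closure (opDom A) = closure (convexHull ℝ (opDom A)) ∧
    closure (opDom A) = closure (Prod.fst '' fitzDom A) ∧
    Convex ℝ (closure (opDom A)) :=
  nearly_convex_of_maxMonotone_sum_general p hp A hmono h
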